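/- For 1 < q < p and T > 0, the first eigenfunctions φ_p(t) = sin_p(π_p t/T) and φ_q(t) = sin_q(π_q t/T) of the one-dimensional p- and q-Laplacians on (0,T) are linearly independent. -/
import Mathlib


open Real MeasureTheory Set

/-- The generalized π constant `π_r = 2π / (r sin(π/r))`. -/
noncomputable def piR (r : ℝ) : ℝ := 2 * π / (r * Real.sin (π / r))

/-- The generalized arcsine `arcsin_r(x) = ∫₀^x (1 - s^r)^(-1/r) ds`. -/
noncomputable def arcsinR (r x : ℝ) : ℝ :=
  ∫ s in (0:ℝ)..x, (1 - s ^ r) ^ (-(1 : ℝ) / r)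


lemma rpow_le_self_aux {r s : ℝ} (hr : 1 ≤ r) (h0 : 0 ≤ s) (h1 : s ≤ 1) : s ^ r ≤ s := by
  rcases eq_or_lt_of_le h0 with h0' | h0'
  · rw [← h0', Real.zero_rpow (by linarith)]
  · calc s ^ r ≤ s ^ (1:ℝ) := Real.rpow_le_rpow_of_exponent_ge h0' h1 hr
      _ = s := Real.rpow_one s

lemma integrand_bounds {r x : ℝ} (hr : 1 < r) (hx0 : 0 ≤ x) (hx : x ≤ 1/2) :
    1 + x / r ≤ (1 - x) ^ (-(1:ℝ)/r) ∧ (1 - x) ^ (-(1:ℝ)/r) ≤ 1 + 2 * x := by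
  have h1x : (0:ℝ) < 1 - x := by linarith
  have hrpos : (0:ℝ) < r := by linarith
  constructor
  · have hlog : Real.log (1 - x) ≤ -x := by
      have := Real.log_le_sub_one_of_pos h1x; linarith
    have hdef : (1 - x) ^ (-(1:ℝ)/r) = Real.exp (Real.log (1 - x) * (-(1:ℝ)/r)) :=
      Real.rpow_def_of_pos h1x _
    have hneg : (-(1:ℝ)/r) < 0 := by have h := div_pos one_pos hrpos; rw [neg_div]; linarith
    have hmul : x / r ≤ Real.log (1 - x) * (-(1:ℝ)/r) := by
      have := mul_le_mul_of_nonpos_right hlog (le_of_lt hneg)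
      calc x / r = (-x) * (-(1:ℝ)/r) := by field_simp
        _ ≤ Real.log (1 - x) * (-(1:ℝ)/r) := this
    calc 1 + x / r ≤ Real.exp (x / r) := by have := Real.add_one_le_exp (x/r); linarith
      _ ≤ Real.exp (Real.log (1 - x) * (-(1:ℝ)/r)) := Real.exp_le_exp.mpr hmul
      _ = (1 - x) ^ (-(1:ℝ)/r) := hdef.symm
  · have h1 : (1 - x) ^ (-(1:ℝ)/r) ≤ (1 - x) ^ (-(1:ℝ)) := by
      apply Real.rpow_le_rpow_of_exponent_ge h1x (by linarith)
      rw [neg_div]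
      have : 1 / r ≤ 1 := by rw [div_le_one hrpos]; linarith
      linarith
    have h2 : (1 - x) ^ (-(1:ℝ)) = (1 - x)⁻¹ := Real.rpow_neg_one _
    have h3 : (1 - x)⁻¹ ≤ 1 + 2 * x := by
      rw [inv_eq_one_div, div_le_iff₀ h1x]; nlinarith
    linarith [h1.trans_eq h2]

lemma sub_rpow_pos {r s : ℝ} (hr : 1 < r) (hs0 : 0 ≤ s) (hs : s ≤ 1/2) :
    s ^ r ≤ 1/2 ∧ 0 ≤ s ^ r :=
  ⟨(rpow_le_self_aux hr.le hs0 (by linarith)).trans hs, Real.rpow_nonneg hs0 r⟩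

lemma integrand_contOn {r : ℝ} (hr : 1 < r) :
    ContinuousOn (fun s : ℝ => (1 - s ^ r) ^ (-(1:ℝ)/r)) (Icc 0 (1/2)) := by
  have hc : Continuous (fun s : ℝ => 1 - s ^ r) :=
    continuous_const.sub (Real.continuous_rpow_const (by linarith))
  refine hc.continuousOn.rpow_const fun s hs => Or.inl ?_
  have := sub_rpow_pos hr hs.1 hs.2
  intro h; rw [sub_eq_zero] at h; linarith [this.1]

lemma integrand_intble {r u : ℝ} (hr : 1 < r) (hu0 : 0 ≤ u) (hu : u ≤ 1/2) :
    IntervalIntegrable (fun s : ℝ => (1 - s ^ r) ^ (-(1:ℝ)/r)) volume 0 u := by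
  apply ContinuousOn.intervalIntegrable
  rw [uIcc_of_le hu0]
  exact (integrand_contOn hr).mono (Icc_subset_Icc le_rfl hu)

lemma integral_one_add_rpow {r u a : ℝ} (hr : 1 < r) (hu0 : 0 ≤ u) :
    ∫ s in (0:ℝ)..u, (1 + a * s ^ r) = u + a * u ^ (r+1) / (r+1) := by
  have h1 : IntervalIntegrable (fun _ : ℝ => (1:ℝ)) volume 0 u := intervalIntegrable_const
  have h2 : IntervalIntegrable (fun s : ℝ => a * s ^ r) volume 0 u := by
    apply Continuous.intervalIntegrable
    exact continuous_const.mul (Real.continuous_rpow_const (by linarith))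
  rw [intervalIntegral.integral_add h1 h2, intervalIntegral.integral_const,
    intervalIntegral.integral_const_mul, integral_rpow (Or.inl (by linarith))]
  rw [Real.zero_rpow (by linarith : r + 1 ≠ 0)]
  simp
  ring

lemma arcsinR_zero (r : ℝ) : arcsinR r 0 = 0 := intervalIntegral.integral_same

lemma arcsinR_le {r u : ℝ} (hr : 1 < r) (hu0 : 0 ≤ u) (hu : u ≤ 1/2) :
    arcsinR r u ≤ u + 2 * u ^ (r+1) / (r+1) := by
  have key : arcsinR r u ≤ ∫ s in (0:ℝ)..u, (1 + 2 * s ^ r) := by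
    apply intervalIntegral.integral_mono_on hu0 (integrand_intble hr hu0 hu)
    · apply Continuous.intervalIntegrable
      exact continuous_const.add (continuous_const.mul (Real.continuous_rpow_const (by linarith)))
    · intro s hs
      have h := sub_rpow_pos hr hs.1 (hs.2.trans hu)
      exact (integrand_bounds hr h.2 h.1).2
  calc arcsinR r u ≤ _ := key
    _ = u + 2 * u ^ (r+1) / (r+1) := integral_one_add_rpow hr hu0

lemma arcsinR_ge {r u : ℝ} (hr : 1 < r) (hu0 : 0 ≤ u) (hu : u ≤ 1/2) :
    u + u ^ (r+1) / (r*(r+1)) ≤ arcsinR r u := by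
  have key : (∫ s in (0:ℝ)..u, (1 + (1/r) * s ^ r)) ≤ arcsinR r u := by
    apply intervalIntegral.integral_mono_on hu0 ?_ (integrand_intble hr hu0 hu)
    · intro s hs
      have h := sub_rpow_pos hr hs.1 (hs.2.trans hu)
      have := (integrand_bounds hr h.2 h.1).1
      calc 1 + 1/r * s ^ r = 1 + s ^ r / r := by ring
        _ ≤ _ := this
    · apply Continuous.intervalIntegrable
      exact continuous_const.add (continuous_const.mul (Real.continuous_rpow_const (by linarith)))
  calc u + u ^ (r+1) / (r*(r+1)) = u + (1/r) * u ^ (r+1) / (r+1) := by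
        field_simp
    _ = ∫ s in (0:ℝ)..u, (1 + (1/r) * s ^ r) := (integral_one_add_rpow hr hu0).symm
    _ ≤ arcsinR r u := key

lemma arcsinR_ge_self {r u : ℝ} (hr : 1 < r) (hu0 : 0 ≤ u) (hu : u ≤ 1/2) :
    u ≤ arcsinR r u := by
  have := arcsinR_ge hr hu0 hu
  have h1 : 0 ≤ u ^ (r+1) / (r*(r+1)) := by positivity
  linarith

lemma arcsinR_le_two_mul {r u : ℝ} (hr : 1 < r) (hu0 : 0 ≤ u) (hu : u ≤ 1/2) :
    arcsinR r u ≤ 2 * u := by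
  have h1 := arcsinR_le hr hu0 hu
  have h2 : u ^ (r+1) ≤ u := rpow_le_self_aux (by linarith) hu0 (by linarith)
  have h3 : 2 * u ^ (r+1) / (r+1) ≤ u := by
    rw [div_le_iff₀ (by linarith : (0:ℝ) < r + 1)]; nlinarith
  linarith

lemma arcsinR_contOn {r : ℝ} (hr : 1 < r) : ContinuousOn (arcsinR r) (Icc 0 (1/2)) := by
  have h : IntegrableOn (fun s : ℝ => (1 - s ^ r) ^ (-(1:ℝ)/r)) (uIcc (0:ℝ) (1/2)) volume := by
    rw [uIcc_of_le (by norm_num)]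
    exact (integrand_contOn hr).integrableOn_Icc
  have := intervalIntegral.continuousOn_primitive_interval (a := (0:ℝ)) (b := 1/2) h
  rw [uIcc_of_le (by norm_num)] at this
  exact this

lemma master {p q c k y0 : ℝ} (hq : 1 < q) (hqp : q < p) (hc : 0 < c) (hk : 0 < k)
    (hy0 : 0 < y0) (hy0h : y0 ≤ 1/2) (hcy0 : c * y0 ≤ 1/2)
    (heq : ∀ y ∈ Ioc (0:ℝ) y0, arcsinR p (c*y) = k * arcsinR q y) : False := by
  have hp : 1 < p := hq.trans hqp
  -- c * y bounds
  have hcy : ∀ y ∈ Ioc (0:ℝ) y0, 0 < c * y ∧ c * y ≤ 1/2 := by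
    intro y hy
    refine ⟨mul_pos hc hy.1, le_trans ?_ hcy0⟩
    exact mul_le_mul_of_nonneg_left hy.2 hc.le
  -- first order: k ≤ c + c^2 * y and c ≤ k + k * y
  have hfirst : ∀ y ∈ Ioc (0:ℝ) y0, k ≤ c + c^2 * y ∧ c ≤ k + k * y := by
    intro y hy
    obtain ⟨hcy1, hcy2⟩ := hcy y hy
    have hy1 : 0 < y := hy.1
    have hyh : y ≤ 1/2 := hy.2.trans hy0h
    have e := heq y hy
    constructor
    · have h1 : k * y ≤ k * arcsinR q y :=
        mul_le_mul_of_nonneg_left (arcsinR_ge_self hq hy1.le hyh) hk.le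
      have h2 : arcsinR p (c*y) ≤ c*y + 2*(c*y)^(p+1)/(p+1) := arcsinR_le hp hcy1.le hcy2
      have h3 : (c*y)^(p+1) ≤ (c*y)*(c*y) := by
        have h4 : (c*y)^(p+1) ≤ (c*y)^(2:ℝ) :=
          Real.rpow_le_rpow_of_exponent_ge hcy1 (by linarith) (by linarith)
        rw [Real.rpow_two] at h4
        calc (c*y)^(p+1) ≤ (c*y)^2 := h4
          _ = (c*y)*(c*y) := sq (c*y) ▸ (sq (c*y)).symm ▸ by ring
      have h5 : 2*(c*y)^(p+1)/(p+1) ≤ (c*y)*(c*y) := by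
        rw [div_le_iff₀ (by linarith : (0:ℝ) < p+1)]; nlinarith
      have h6 : k * y ≤ (c + c^2*y) * y := by
        nlinarith [h1, h2, h5]
      exact le_of_mul_le_mul_right (by linarith) hy1
    · have h1 : c * y ≤ arcsinR p (c*y) := arcsinR_ge_self hp hcy1.le hcy2
      have h2 : arcsinR q y ≤ y + 2*y^(q+1)/(q+1) := arcsinR_le hq hy1.le hyh
      have h3 : y^(q+1) ≤ y*y := by
        have h4 : y^(q+1) ≤ y^(2:ℝ) :=
          Real.rpow_le_rpow_of_exponent_ge hy1 (by linarith) (by linarith)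
        rw [Real.rpow_two] at h4
        calc y^(q+1) ≤ y^2 := h4
          _ = y*y := by ring
      have h5 : 2*y^(q+1)/(q+1) ≤ y*y := by
        rw [div_le_iff₀ (by linarith : (0:ℝ) < q+1)]; nlinarith
      have h6 : c * y ≤ (k + k*y) * y := by
        rw [e] at h1; nlinarith
      exact le_of_mul_le_mul_right (by linarith) hy1
  have hck : c = k := by
    have h1 : k ≤ c := by
      apply le_of_forall_pos_le_add
      intro ε hε
      set y := min y0 (ε/(c^2+1)) with hy_def
      have hy_mem : y ∈ Ioc (0:ℝ) y0 := ⟨lt_min hy0 (by positivity), min_le_left _ _⟩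
      have h := (hfirst y hy_mem).1
      have hy2 : y ≤ ε/(c^2+1) := min_le_right _ _
      have : c^2 * y ≤ ε := by
        have hpos : (0:ℝ) < c^2+1 := by positivity
        rw [le_div_iff₀ hpos] at hy2
        nlinarith [hy_mem.1.le]
      linarith
    have h2 : c ≤ k := by
      apply le_of_forall_pos_le_add
      intro ε hε
      set y := min y0 (ε/(k+1)) with hy_def
      have hy_mem : y ∈ Ioc (0:ℝ) y0 := ⟨lt_min hy0 (by positivity), min_le_left _ _⟩
      have h := (hfirst y hy_mem).2
      have hy2 : y ≤ ε/(k+1) := min_le_right _ _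
      have : k * y ≤ ε := by
        have hpos : (0:ℝ) < k+1 := by linarith
        rw [le_div_iff₀ hpos] at hy2
        nlinarith
      linarith
    exact le_antisymm h2 h1
  subst hck
  -- second order
  have hsecond : ∀ y ∈ Ioc (0:ℝ) y0, c/(q*(q+1)) ≤ 2*c^(p+1) * y^(p-q) := by
    intro y hy
    obtain ⟨hcy1, hcy2⟩ := hcy y hy
    have hy1 : 0 < y := hy.1
    have hyh : y ≤ 1/2 := hy.2.trans hy0h
    have e := heq y hy
    have h1 : c*(y + y^(q+1)/(q*(q+1))) ≤ c * arcsinR q y :=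
      mul_le_mul_of_nonneg_left (arcsinR_ge hq hy1.le hyh) hc.le
    have h2 : arcsinR p (c*y) ≤ c*y + 2*(c*y)^(p+1)/(p+1) := arcsinR_le hp hcy1.le hcy2
    have h3 : c * y^(q+1)/(q*(q+1)) ≤ 2*(c*y)^(p+1) := by
      have hp1 : (0:ℝ) < p + 1 := by linarith
      have hrp : (0:ℝ) ≤ (c*y)^(p+1) := Real.rpow_nonneg hcy1.le _
      have h4 : 2*(c*y)^(p+1)/(p+1) ≤ 2*(c*y)^(p+1) := by
        rw [div_le_iff₀ hp1]; nlinarith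
      rw [e] at h2
      have hq1 : (0:ℝ) < q*(q+1) := by nlinarith
      calc c * y^(q+1)/(q*(q+1)) = c*(y + y^(q+1)/(q*(q+1))) - c*y := by field_simp; ring
        _ ≤ c * arcsinR q y - c*y := by linarith
        _ ≤ 2*(c*y)^(p+1)/(p+1) := by linarith
        _ ≤ 2*(c*y)^(p+1) := h4
    have h5 : (c*y)^(p+1) = c^(p+1) * y^(p+1) := Real.mul_rpow hc.le hy1.le
    have h6 : y^(p+1) = y^(q+1) * y^(p-q) := by
      rw [← Real.rpow_add hy1]; ring_nf
    have hyq : (0:ℝ) < y^(q+1) := Real.rpow_pos_of_pos hy1 _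
    have h7 : c * y^(q+1)/(q*(q+1)) ≤ 2*c^(p+1)*(y^(q+1) * y^(p-q)) := by
      rw [← h6]
      calc c * y^(q+1)/(q*(q+1)) ≤ 2*(c*y)^(p+1) := h3
        _ = 2*c^(p+1)*y^(p+1) := by rw [h5]; ring
    have hq1 : (0:ℝ) < q*(q+1) := by nlinarith
    have h8 : (c/(q*(q+1))) * y^(q+1) ≤ (2*c^(p+1) * y^(p-q)) * y^(q+1) := by
      calc (c/(q*(q+1))) * y^(q+1) = c * y^(q+1)/(q*(q+1)) := by ring
        _ ≤ 2*c^(p+1)*(y^(q+1) * y^(p-q)) := h7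
        _ = (2*c^(p+1) * y^(p-q)) * y^(q+1) := by ring
    exact le_of_mul_le_mul_right h8 hyq
  -- derive contradiction
  have hd : (0:ℝ) < p - q := by linarith
  set L := c/(q*(q+1)) with hL
  set E := 2*c^(p+1) with hE
  have hLpos : 0 < L := by rw [hL]; positivity
  have hEpos : 0 < E := by rw [hE]; positivity
  set R := (L/E)^(1/(p-q)) with hR
  have hRpos : 0 < R := Real.rpow_pos_of_pos (by positivity) _
  set y := min y0 (R/2) with hy_def
  have hy_mem : y ∈ Ioc (0:ℝ) y0 := ⟨lt_min hy0 (by positivity), min_le_left _ _⟩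
  have h := hsecond y hy_mem
  have hyR : y < R := lt_of_le_of_lt (min_le_right _ _) (by linarith)
  have hstep : y^(p-q) < R^(p-q) := Real.rpow_lt_rpow hy_mem.1.le hyR hd
  have hRd : R^(p-q) = L/E := by
    rw [hR, ← Real.rpow_mul (by positivity : (0:ℝ) ≤ L/E)]
    rw [one_div, inv_mul_cancel₀ (ne_of_gt hd), Real.rpow_one]
  rw [hRd] at hstep
  have hEy : E * y^(p-q) < E * (L/E) := mul_lt_mul_of_pos_left hstep hEpos
  rw [mul_div_cancel₀ _ (ne_of_gt hEpos)] at hEy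
  have : L ≤ E * y^(p-q) := by calc L = c/(q*(q+1)) := hL
                                    _ ≤ 2*c^(p+1) * y^(p-q) := h
                                    _ = E * y^(p-q) := by rw [hE]
  linarith

lemma piR_pos {r : ℝ} (hr : 1 < r) : 0 < piR r := by
  have h0 : (0:ℝ) < r := by linarith
  have h1 : 0 < π / r := div_pos Real.pi_pos h0
  have h2 : π / r < π := by
    rw [div_lt_iff₀ h0]; nlinarith [Real.pi_pos]
  have hs : 0 < Real.sin (π / r) := Real.sin_pos_of_pos_of_lt_pi h1 h2
  exact div_pos (by positivity) (by positivity)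

lemma derive {r1 r2 T c : ℝ} (hr1 : 1 < r1) (hr2 : 1 < r2) (hT : 0 < T)
    {sin1 sin2 : ℝ → ℝ}
    (hinv1 : ∀ x ∈ Icc (0:ℝ) 1, sin1 (arcsinR r1 x) = x)
    (hinv2 : ∀ x ∈ Icc (0:ℝ) 1, sin2 (arcsinR r2 x) = x)
    (h : ∀ t ∈ Icc (0:ℝ) T, sin1 (piR r1 * t / T) = c * sin2 (piR r2 * t / T)) :
    ∃ y0 : ℝ, 0 < y0 ∧ y0 ≤ 1/2 ∧ 0 < c ∧ c * y0 ≤ 1/2 ∧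
      ∀ y ∈ Ioc (0:ℝ) y0, arcsinR r1 (c*y) = (piR r1 / piR r2) * arcsinR r2 y := by
  have hπ1 : 0 < piR r1 := piR_pos hr1
  have hπ2 : 0 < piR r2 := piR_pos hr2
  set k := piR r1 / piR r2 with hk_def
  have hk : 0 < k := div_pos hπ1 hπ2
  set y0 : ℝ := min (1/2) (min (piR r2 / 2) (1/(4*(k+1)))) with hy0_def
  have hy0 : 0 < y0 := by
    apply lt_min (by norm_num)
    exact lt_min (by positivity) (by positivity)
  have hy0a : y0 ≤ 1/2 := min_le_left _ _
  have hy0b : y0 ≤ piR r2 / 2 := le_trans (min_le_right _ _) (min_le_left _ _)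
  have hy0c : y0 ≤ 1/(4*(k+1)) := le_trans (min_le_right _ _) (min_le_right _ _)
  -- main step: for each y in Ioc 0 y0, produce x = c*y with arcsinR r1 x = k * arcsinR r2 y
  have main : ∀ y ∈ Ioc (0:ℝ) y0, c * y ∈ Icc (0:ℝ) (1/2) ∧
      arcsinR r1 (c*y) = k * arcsinR r2 y := by
    intro y hy
    have hy1 : 0 < y := hy.1
    have hyh : y ≤ 1/2 := hy.2.trans hy0a
    set a := arcsinR r2 y with ha_def
    have ha1 : y ≤ a := arcsinR_ge_self hr2 hy1.le hyh
    have ha2 : a ≤ 2*y := arcsinR_le_two_mul hr2 hy1.le hyh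
    have ha0 : 0 < a := lt_of_lt_of_le hy1 ha1
    set t := T * a / piR r2 with ht_def
    have ht_mem : t ∈ Icc (0:ℝ) T := by
      constructor
      · positivity
      · rw [ht_def, div_le_iff₀ hπ2]
        have : a ≤ piR r2 := by
          calc a ≤ 2*y := ha2
            _ ≤ 2*y0 := by linarith [hy.2]
            _ ≤ piR r2 := by linarith [hy0b]
        nlinarith
    have harg2 : piR r2 * t / T = a := by
      rw [ht_def]; field_simp
    have harg1 : piR r1 * t / T = k * a := by
      rw [ht_def, hk_def]; field_simp
    have hval2 : sin2 (piR r2 * t / T) = y := by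
      rw [harg2, ha_def]
      exact hinv2 y ⟨hy1.le, by linarith⟩
    -- find x via IVT
    have hka_mem : k * a ∈ Icc (arcsinR r1 0) (arcsinR r1 (1/2)) := by
      constructor
      · rw [arcsinR_zero]; positivity
      · have h1 : (1/2 : ℝ) ≤ arcsinR r1 (1/2) :=
          arcsinR_ge_self hr1 (by norm_num) (by norm_num)
        have h2 : k * a ≤ 1/2 := by
          calc k * a ≤ k * (2*y) := mul_le_mul_of_nonneg_left ha2 hk.le
            _ ≤ k * (2*y0) := by nlinarith [hy.2]
            _ ≤ k * (2*(1/(4*(k+1)))) := by nlinarith [hy0c]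
            _ ≤ 1/2 := by
                have hk1 : (0:ℝ) < k+1 := by linarith
                have he : k * (2*(1/(4*(k+1)))) = k/(2*(k+1)) := by field_simp; ring
                rw [he, div_le_iff₀ (by linarith : (0:ℝ) < 2*(k+1))]
                linarith
        linarith
    obtain ⟨x, hx_mem, hx⟩ := intermediate_value_Icc (by norm_num : (0:ℝ) ≤ 1/2)
      (arcsinR_contOn hr1) hka_mem
    have hval1 : sin1 (piR r1 * t / T) = x := by
      rw [harg1, ← hx]
      exact hinv1 x ⟨hx_mem.1, by linarith [hx_mem.2]⟩
    have hxy : x = c * y := by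
      have := h t ht_mem
      rw [hval1, hval2] at this
      exact this
    refine ⟨⟨by rw [← hxy]; exact hx_mem.1, by rw [← hxy]; exact hx_mem.2⟩, ?_⟩
    rw [← hxy, hx]
  -- c > 0
  have hc : 0 < c := by
    have h0 := main y0 ⟨hy0, le_rfl⟩
    have hpos : 0 < k * arcsinR r2 y0 := by
      have h' := arcsinR_ge_self hr2 hy0.le hy0a
      nlinarith
    rcases lt_or_ge 0 c with h | h
    · exact h
    · exfalso
      have hcy : c * y0 ≤ 0 := mul_nonpos_of_nonpos_of_nonneg h hy0.le
      have hcy' : 0 ≤ c * y0 := h0.1.1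
      have : c * y0 = 0 := le_antisymm hcy hcy'
      rw [this, arcsinR_zero] at h0
      linarith [h0.2]
  exact ⟨y0, hy0, hy0a, hc, (main y0 ⟨hy0, le_rfl⟩).1.2, fun y hy => (main y hy).2⟩

theorem first_eigenfunctions_linearly_independent
    (p q T : ℝ) (hq : 1 < q) (hqp : q < p) (hT : 0 < T)
    (sinp sinq : ℝ → ℝ)
    (hinvp : ∀ x ∈ Icc (0:ℝ) 1, sinp (arcsinR p x) = x)
    (hreflp : ∀ x : ℝ, sinp (piR p - x) = sinp x)
    (hinvq : ∀ x ∈ Icc (0:ℝ) 1, sinq (arcsinR q x) = x)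
    (hreflq : ∀ x : ℝ, sinq (piR q - x) = sinq x)
    (φp φq : ℝ → ℝ)
    (hφp : ∀ t, φp t = sinp (piR p * t / T))
    (hφq : ∀ t, φq t = sinq (piR q * t / T)) :
    (∀ c : ℝ, ¬ (∀ t ∈ Icc (0:ℝ) T, φp t = c * φq t)) ∧
      (∀ c : ℝ, ¬ (∀ t ∈ Icc (0:ℝ) T, φq t = c * φp t)) := by
  have hp : 1 < p := hq.trans hqp
  have hπp : 0 < piR p := piR_pos hp
  have hπq : 0 < piR q := piR_pos hq
  constructor
  · intro c hcontr
    have h' : ∀ t ∈ Icc (0:ℝ) T, sinp (piR p * t / T) = c * sinq (piR q * t / T) := by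
      intro t ht
      have := hcontr t ht
      rwa [hφp t, hφq t] at this
    obtain ⟨y0, hy0, hy0a, hc, hcy0, heq⟩ := derive hp hq hT hinvp hinvq h'
    exact master hq hqp hc (div_pos hπp hπq) hy0 hy0a hcy0 heq
  · intro c hcontr
    have h' : ∀ t ∈ Icc (0:ℝ) T, sinq (piR q * t / T) = c * sinp (piR p * t / T) := by
      intro t ht
      have := hcontr t ht
      rwa [hφp t, hφq t] at this
    obtain ⟨y0, hy0, hy0a, hc, hcy0, heq⟩ := derive hq hp hT hinvq hinvp h'
    set kq := piR q / piR p with hkq_def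
    have hkq : 0 < kq := div_pos hπq hπp
    have heq' : ∀ z ∈ Ioc (0:ℝ) (c*y0), arcsinR p ((1/c)*z) = (1/kq) * arcsinR q z := by
      intro z hz
      have hzc : z / c ∈ Ioc (0:ℝ) y0 := by
        constructor
        · exact div_pos hz.1 hc
        · rw [div_le_iff₀ hc]
          calc z ≤ c * y0 := hz.2
            _ = y0 * c := by ring
      have e := heq (z/c) hzc
      rw [mul_div_cancel₀ z (ne_of_gt hc)] at e
      have : (1/c) * z = z / c := by ring
      rw [this, e]
      field_simp
    have hcy0' : (1/c) * (c*y0) ≤ 1/2 := by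
      have : (1/c) * (c*y0) = y0 := by field_simp
      rw [this]; exact hy0a
    exact master hq hqp (by positivity : (0:ℝ) < 1/c)
      (by rw [one_div]; exact inv_pos.mpr hkq) (by positivity) hcy0 hcy0' heq'
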